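/- For every nonempty finite digraph D, the DAG-depth ddp(D) equals the minimum of depth(P) taken over all valid DAG-depth decompositions (P, org) of D. -/

import Mathlib

open scoped Classical

noncomputable section

/-- A finite directed graph: a finite vertex set together with an adjacency
relation whose edges join vertices of the graph. -/
structure FinDigraph (α : Type) where
  verts : Finset α
  Adj : α → α → Prop
  adj_mem : ∀ u v, Adj u v → u ∈ verts ∧ v ∈ verts

namespace FinDigraph

variable {α β : Type}

/-- The out-neighbourhood `N⁺_D(v)`. -/
def outNbhd (D : FinDigraph α) (v : α) : Set α := {u | D.Adj v u}

/-- The set of vertices reachable from `s` by a (possibly trivial) directed path. -/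
def reachSet (D : FinDigraph α) (s : α) : Finset α :=
  D.verts.filter fun v => Relation.ReflTransGen D.Adj s v

/-- A reachable fragment: an inclusion-maximal set among the reachable sets. -/
def IsFragment (D : FinDigraph α) (R : Finset α) : Prop :=
  (∃ s ∈ D.verts, R = D.reachSet s) ∧
  ∀ s ∈ D.verts, R ⊆ D.reachSet s → R = D.reachSet s

/-- The collection of all reachable fragments of `D`. -/
def fragments (D : FinDigraph α) : Finset (Finset α) :=
  D.verts.powerset.filter fun R => D.IsFragment R

/-- The induced subdigraph `D[S]`. -/
def induce (D : FinDigraph α) (S : Finset α) : FinDigraph α where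
  verts := D.verts ∩ S
  Adj u v := D.Adj u v ∧ u ∈ S ∧ v ∈ S
  adj_mem := fun u v h => ⟨Finset.mem_inter.mpr ⟨(D.adj_mem u v h.1).1, h.2.1⟩,
    Finset.mem_inter.mpr ⟨(D.adj_mem u v h.1).2, h.2.2⟩⟩

/-- Deletion of a vertex: `D − v = D[V(D) ∖ {v}]`. -/
def deleteVert (D : FinDigraph α) (v : α) : FinDigraph α :=
  D.induce (D.verts.erase v)

/-- Fuel-based helper for DAG-depth; the fuel `|V(D)|` always suffices since each
recursive call strictly decreases the number of vertices. -/
def ddpAux : ℕ → FinDigraph α → ℕ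
  | 0, _ => 0
  | n+1, D =>
    if hcard : D.verts.card ≤ 1 then 1
    else if D.fragments.card = 1 then
      1 + D.verts.inf' (Finset.card_pos.mp (by omega)) fun v => ddpAux n (D.deleteVert v)
    else
      D.fragments.sup fun R => ddpAux n (D.induce R)

/-- The DAG-depth of a digraph. -/
def ddp (D : FinDigraph α) : ℕ := ddpAux D.verts.card D

/-- A DAG: a (finite) digraph with no directed cycles. -/
def IsDag (P : FinDigraph α) : Prop := ∀ v, ¬ Relation.TransGen P.Adj v v

/-- A root of a DAG: a vertex of indegree zero. -/
def IsRoot (P : FinDigraph α) (r : α) : Prop := r ∈ P.verts ∧ ∀ u, ¬ P.Adj u r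

/-- `y` is a descendant of `x`: there is a (possibly trivial) directed path from `x` to `y`. -/
def Desc (P : FinDigraph α) (x y : α) : Prop := Relation.ReflTransGen P.Adj x y

/-- `l` is a directed path in `P` starting at a root of `P` and ending at `v`. -/
def IsRootPath (P : FinDigraph α) (l : List α) (v : α) : Prop :=
  l ≠ [] ∧ l.Chain' P.Adj ∧ (∀ x ∈ l, x ∈ P.verts) ∧
  (∃ r, l.head? = some r ∧ P.IsRoot r) ∧ l.getLast? = some v

/-- The depth of a DAG: the maximum number of vertices on a directed path. -/
def depth (P : FinDigraph α) : ℕ :=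
  sSup {n : ℕ | ∃ l : List α, l.Chain' P.Adj ∧ (∀ x ∈ l, x ∈ P.verts) ∧ l.length = n}

/-- The Neighbor cover condition for a DAG-depth decomposition `(P, org)` of `D`. -/
def NeighborCover (D : FinDigraph α) (P : FinDigraph β) (org : β → α) : Prop :=
  ∀ v' ∈ P.verts, ∀ u, D.Adj (org v') u →
    (∃ u' ∈ P.verts, org u' = u ∧ P.Desc v' u') ∨
    (∀ l, P.IsRootPath l v' → ∃ u' ∈ l, org u' = u)

/-- `(P, org)` is a valid DAG-depth decomposition of `D`: `P` is a DAG, `org` maps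
`V(P)` onto `V(D)`, and the Neighbor cover condition holds. -/
def IsValidDecomp (D : FinDigraph α) (P : FinDigraph β) (org : β → α) : Prop :=
  P.IsDag ∧ (∀ v' ∈ P.verts, org v' ∈ D.verts) ∧
  (∀ v ∈ D.verts, ∃ v' ∈ P.verts, org v' = v) ∧
  NeighborCover D P org

end FinDigraph

/-!
Both inequalities follow the recursion that defines `ddp`.

For the upper bound, a decomposition of `D - v`, with `v` minimizing `ddp (D - v)`, receives a new
root labelled `v` (`cone`); when `D` has several reachable fragments, decompositions of the
fragments are put side by side (`disjointUnion`), which stays valid because no edge leaves a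
fragment.

For the lower bound, take a root path ending at `x` none of whose other vertices is labelled in a
subdigraph `G`, and assume the source of `G` has a preimage below `x`. The Neighbor cover
condition, applied along the paths of `G`, gives every vertex of `G` a preimage below `x`. After
deleting `org x` from `G` (or any vertex if `org x ∉ G`), each fragment `R` of the rest has such a
root path ending at the first vertex `z` below `x` labelled in `R`, and `z` lies strictly lower
than `x`; induction gives `ddp G ≤ height x`.
-/

lemma List.IsChain.exists_eq_map_of_cons {α β : Type*} {R : α → α → Prop} {S : β → β → Prop}
    {f : α → β} (hS : ∀ a b, S (f a) b → ∃ a', b = f a' ∧ R a a') :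
    ∀ {a : α} {l : List β}, (f a :: l).IsChain S → ∃ l', l = l'.map f ∧ (a :: l').IsChain R
  | a, [], _ => ⟨[], rfl, .singleton a⟩
  | a, b :: l, h => by
    obtain ⟨a', rfl, haa'⟩ := hS a b (List.isChain_cons_cons.1 h).1
    obtain ⟨l', rfl, hl'⟩ := exists_eq_map_of_cons hS (List.isChain_cons_cons.1 h).2
    exact ⟨a' :: l', rfl, .cons_cons haa' hl'⟩

namespace FinDigraph

variable {α β : Type}

section Fragments

variable {D : FinDigraph α} {s u v w : α} {R : Finset α}

@[simp]
lemma mem_reachSet : v ∈ D.reachSet s ↔ v ∈ D.verts ∧ Relation.ReflTransGen D.Adj s v :=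
  Finset.mem_filter

lemma mem_reachSet_self (hs : s ∈ D.verts) : s ∈ D.reachSet s :=
  mem_reachSet.2 ⟨hs, .refl⟩

lemma reachSet_subset_verts : D.reachSet s ⊆ D.verts :=
  Finset.filter_subset _ _

lemma mem_reachSet_of_adj (hu : u ∈ D.reachSet s) (h : D.Adj u w) : w ∈ D.reachSet s :=
  mem_reachSet.2 ⟨(D.adj_mem u w h).2, (mem_reachSet.1 hu).2.tail h⟩

lemma IsFragment.subset_verts (hR : D.IsFragment R) : R ⊆ D.verts := by
  obtain ⟨⟨s, -, rfl⟩, -⟩ := hR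
  exact reachSet_subset_verts

lemma mem_fragments : R ∈ D.fragments ↔ D.IsFragment R :=
  ⟨fun h => (Finset.mem_filter.1 h).2,
    fun h => Finset.mem_filter.2 ⟨Finset.mem_powerset.2 h.subset_verts, h⟩⟩

lemma IsFragment.mem_of_adj (hR : D.IsFragment R) (hu : u ∈ R) (h : D.Adj u w) : w ∈ R := by
  obtain ⟨⟨s, -, rfl⟩, -⟩ := hR
  exact mem_reachSet_of_adj hu h

lemma exists_fragment_superset_reachSet (hs : s ∈ D.verts) :
    ∃ R ∈ D.fragments, D.reachSet s ⊆ R := by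
  obtain ⟨R, hsR, hmax⟩ := (D.verts.image D.reachSet).exists_le_maximal
    (Finset.mem_image_of_mem _ hs)
  obtain ⟨t, ht, rfl⟩ := Finset.mem_image.1 hmax.prop
  refine ⟨_, mem_fragments.2 ⟨⟨t, ht, rfl⟩, fun t' ht' hsub => ?_⟩, hsR⟩
  exact le_antisymm hsub (hmax.2 (Finset.mem_image_of_mem _ ht') hsub)

lemma fragments_eq_singleton_verts (hs : s ∈ D.verts) (h : D.reachSet s = D.verts) :
    D.fragments = {D.verts} := by
  refine Finset.eq_singleton_iff_unique_mem.2 ⟨mem_fragments.2 ⟨⟨s, hs, h.symm⟩, ?_⟩, ?_⟩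
  · exact fun t _ hsub => le_antisymm hsub reachSet_subset_verts
  · intro R hR
    obtain ⟨⟨t, -, rfl⟩, hmax⟩ := mem_fragments.1 hR
    rw [hmax s hs (h ▸ reachSet_subset_verts), h]

lemma eq_verts_of_mem_fragments (hR : R ∈ D.fragments) (h : D.fragments.card = 1) :
    R = D.verts := by
  obtain ⟨R₀, hR₀⟩ := Finset.card_eq_one.1 h
  have hunique : ∀ R' ∈ D.fragments, R' = R₀ := fun R' hR' => Finset.mem_singleton.1 (hR₀ ▸ hR')
  refine le_antisymm (mem_fragments.1 hR).subset_verts fun v hv => ?_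
  obtain ⟨R', hR', hsub⟩ := exists_fragment_superset_reachSet hv
  exact (hunique R' hR').trans (hunique R hR).symm ▸ hsub (mem_reachSet_self hv)

lemma ssubset_verts_of_mem_fragments (hR : R ∈ D.fragments) (h : D.fragments.card ≠ 1) :
    R ⊂ D.verts := by
  obtain ⟨⟨s, hs, rfl⟩, -⟩ := mem_fragments.1 hR
  refine Finset.ssubset_iff_subset_ne.2 ⟨reachSet_subset_verts, fun heq => h ?_⟩
  rw [fragments_eq_singleton_verts hs heq, Finset.card_singleton]

end Fragments

section Induce

variable {D : FinDigraph α} {S : Finset α} {s v : α}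

lemma induce_verts_of_subset (h : S ⊆ D.verts) : (D.induce S).verts = S :=
  Finset.inter_eq_right.2 h

lemma induce_verts_self (D : FinDigraph α) : D.induce D.verts = D := by
  obtain ⟨V, A, hA⟩ := D
  simp only [induce, Finset.inter_self, mk.injEq, true_and]
  funext u w
  exact propext (and_iff_left_of_imp (hA u w))

lemma deleteVert_verts : (D.deleteVert v).verts = D.verts.erase v :=
  induce_verts_of_subset (Finset.erase_subset v D.verts)

lemma card_deleteVert (hv : v ∈ D.verts) : (D.deleteVert v).verts.card + 1 = D.verts.card := by
  rw [deleteVert_verts, Finset.card_erase_add_one hv]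

lemma reachSet_induce_reachSet :
    (D.induce (D.reachSet s)).reachSet s = (D.induce (D.reachSet s)).verts := by
  refine le_antisymm reachSet_subset_verts fun u hu => mem_reachSet.2 ⟨hu, ?_⟩
  obtain ⟨-, hsu⟩ := mem_reachSet.1 (Finset.mem_inter.1 hu).2
  induction hsu with
  | refl => exact .refl
  | @tail b c hsb hbc ih =>
    have hb : b ∈ D.reachSet s := mem_reachSet.2 ⟨(D.adj_mem b c hbc).1, hsb⟩
    exact (ih (Finset.mem_inter.2 ⟨reachSet_subset_verts hb, hb⟩)).tail
      ⟨hbc, hb, mem_reachSet_of_adj hb hbc⟩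

end Induce

section Ddp

variable {D : FinDigraph α} {R : Finset α}

lemma nonempty_induce_fragment (hR : R ∈ D.fragments) : (D.induce R).verts.Nonempty := by
  obtain ⟨⟨s, hs, rfl⟩, -⟩ := mem_fragments.1 hR
  rw [induce_verts_of_subset reachSet_subset_verts]
  exact ⟨s, mem_reachSet_self hs⟩

lemma card_induce_fragment_lt (hR : R ∈ D.fragments) (h : D.fragments.card ≠ 1) :
    (D.induce R).verts.card < D.verts.card := by
  have hRV := ssubset_verts_of_mem_fragments hR h
  rw [induce_verts_of_subset hRV.le]
  exact Finset.card_lt_card hRV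

lemma ddpAux_eq_ddp {n : ℕ} (hne : D.verts.Nonempty) (hn : D.verts.card ≤ n) :
    ddpAux n D = ddp D := by
  suffices h : ∀ n m : ℕ, ∀ D : FinDigraph α, D.verts.Nonempty → D.verts.card ≤ n →
      D.verts.card ≤ m → ddpAux n D = ddpAux m D from h _ _ _ hne hn le_rfl
  intro n
  induction n with
  | zero => intro m D hne hn _; exact absurd hn (Finset.card_pos.2 hne).not_ge
  | succ n ih =>
    intro m D hne hn hm
    obtain ⟨m, rfl⟩ := Nat.exists_eq_add_one.2 ((Finset.card_pos.2 hne).trans_le hm)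
    simp only [ddpAux]
    split_ifs with h1 h2
    · rfl
    · congr 1
      refine Finset.inf'_congr _ rfl fun v hv => ?_
      have := card_deleteVert hv
      exact ih _ _ (Finset.card_pos.1 (by omega)) (by omega) (by omega)
    · refine Finset.sup_congr rfl fun R hR => ?_
      have := card_induce_fragment_lt hR h2
      exact ih _ _ (nonempty_induce_fragment hR) (by omega) (by omega)

lemma ddp_eq (hne : D.verts.Nonempty) : ddp D =
    if D.verts.card ≤ 1 then 1
    else if D.fragments.card = 1 then 1 + D.verts.inf' hne fun v => ddp (D.deleteVert v)
    else D.fragments.sup fun R => ddp (D.induce R) := by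
  obtain ⟨n, hn⟩ := Nat.exists_eq_add_one.2 (Finset.card_pos.2 hne)
  rw [ddp, hn]
  simp only [ddpAux, hn]
  split_ifs with h1 h2
  · rfl
  · congr 1
    refine Finset.inf'_congr _ rfl fun v hv => ?_
    have := card_deleteVert hv
    exact ddpAux_eq_ddp (Finset.card_pos.1 (by omega)) (by omega)
  · refine Finset.sup_congr rfl fun R hR => ?_
    have := card_induce_fragment_lt hR h2
    exact ddpAux_eq_ddp (nonempty_induce_fragment hR) (by omega)

lemma ddp_of_card_le_one (hne : D.verts.Nonempty) (h : D.verts.card ≤ 1) : ddp D = 1 := by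
  rw [ddp_eq hne, if_pos h]

lemma ddp_le_one_add_ddp_deleteVert (h1 : ¬ D.verts.card ≤ 1) (h : D.fragments.card = 1)
    {v : α} (hv : v ∈ D.verts) : ddp D ≤ 1 + ddp (D.deleteVert v) := by
  rw [ddp_eq ⟨v, hv⟩, if_neg h1, if_pos h]
  exact Nat.add_le_add_left (Finset.inf'_le _ hv) 1

lemma ddp_le_of_forall_fragments {n : ℕ} (hne : D.verts.Nonempty)
    (hle : ∀ R ∈ D.fragments, ddp (D.induce R) ≤ n) : ddp D ≤ n := by
  by_cases h : D.fragments.card = 1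
  · obtain ⟨R, hR⟩ := Finset.card_pos.1 (h ▸ Nat.one_pos)
    simpa only [eq_verts_of_mem_fragments hR h, induce_verts_self] using hle R hR
  · obtain ⟨s, hs⟩ := hne
    obtain ⟨R, hR, hsR⟩ := exists_fragment_superset_reachSet hs
    have := Finset.card_lt_card (ssubset_verts_of_mem_fragments hR h)
    have := Finset.card_pos.2 ⟨s, hsR (mem_reachSet_self hs)⟩
    rw [ddp_eq ⟨s, hs⟩, if_neg (by omega), if_neg h]
    exact Finset.sup_le hle

end Ddp

def IsPath (P : FinDigraph α) (l : List α) : Prop :=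
  l.IsChain P.Adj ∧ ∀ x ∈ l, x ∈ P.verts

def height (P : FinDigraph α) (x : α) : ℕ :=
  sSup {n : ℕ | ∃ l : List α, P.IsPath (x :: l) ∧ l.length + 1 = n}

section Paths

variable {P : FinDigraph α} {l : List α} {r x y : α}

lemma isPath_singleton (hx : x ∈ P.verts) : P.IsPath [x] :=
  ⟨.singleton x, by simpa using hx⟩

lemma IsPath.cons (hl : P.IsPath (y :: l)) (hxy : P.Adj x y) : P.IsPath (x :: y :: l) :=
  ⟨.cons_cons hxy hl.1, List.forall_mem_cons.2 ⟨(P.adj_mem x y hxy).1, hl.2⟩⟩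

lemma IsPath.of_cons (hl : P.IsPath (x :: l)) : P.IsPath l :=
  ⟨hl.1.tail, fun z hz => hl.2 z (List.mem_cons_of_mem x hz)⟩

lemma IsPath.length_le_card (hP : P.IsDag) (hl : P.IsPath l) : l.length ≤ P.verts.card := by
  have : IsTrans α (Relation.TransGen P.Adj) := ⟨fun _ _ _ => .trans⟩
  have hnodup : l.Nodup := by
    have h := List.isChain_iff_pairwise.1 (hl.1.imp fun _ _ => Relation.TransGen.single)
    refine h.imp ?_
    rintro a _ hab rfl
    exact hP a hab
  rw [← List.toFinset_card_of_nodup hnodup]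
  exact Finset.card_le_card fun x hx => hl.2 x (List.mem_toFinset.1 hx)

lemma bddAbove_depth (hP : P.IsDag) : BddAbove
    {n : ℕ | ∃ l : List α, l.IsChain P.Adj ∧ (∀ x ∈ l, x ∈ P.verts) ∧ l.length = n} :=
  ⟨P.verts.card, by rintro _ ⟨l, h₁, h₂, rfl⟩; exact IsPath.length_le_card hP ⟨h₁, h₂⟩⟩

lemma le_depth (hP : P.IsDag) (hl : P.IsPath l) : l.length ≤ P.depth :=
  le_csSup (bddAbove_depth hP) ⟨l, hl.1, hl.2, rfl⟩

lemma depth_le {n : ℕ} (h : ∀ l, P.IsPath l → l.length ≤ n) : P.depth ≤ n :=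
  csSup_le' fun _ ⟨l, h₁, h₂, hl⟩ => hl ▸ h l ⟨h₁, h₂⟩

lemma exists_isPath_length_eq_depth (hP : P.IsDag) : ∃ l, P.IsPath l ∧ l.length = P.depth := by
  obtain ⟨l, h₁, h₂, hl⟩ := Nat.sSup_mem (s := {n | ∃ l : List α, l.IsChain P.Adj ∧
    (∀ x ∈ l, x ∈ P.verts) ∧ l.length = n}) ⟨0, [], .nil, by simp, rfl⟩ (bddAbove_depth hP)
  exact ⟨l, ⟨h₁, h₂⟩, hl⟩

lemma bddAbove_height (hP : P.IsDag) (x : α) :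
    BddAbove {n : ℕ | ∃ l : List α, P.IsPath (x :: l) ∧ l.length + 1 = n} :=
  ⟨P.verts.card, by rintro _ ⟨l, hl, rfl⟩; exact hl.length_le_card hP⟩

lemma le_height (hP : P.IsDag) (hl : P.IsPath (x :: l)) : l.length + 1 ≤ P.height x :=
  le_csSup (bddAbove_height hP x) ⟨l, hl, rfl⟩

lemma exists_isPath_length_eq_height (hP : P.IsDag) (hx : x ∈ P.verts) :
    ∃ l, P.IsPath (x :: l) ∧ l.length + 1 = P.height x :=
  Nat.sSup_mem (s := {n | ∃ l, P.IsPath (x :: l) ∧ l.length + 1 = n})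
    ⟨1, [], isPath_singleton hx, rfl⟩ (bddAbove_height hP x)

lemma one_le_height (hP : P.IsDag) (hx : x ∈ P.verts) : 1 ≤ P.height x :=
  le_height hP (l := []) (isPath_singleton hx)

lemma height_le_depth (hP : P.IsDag) (x : α) : P.height x ≤ P.depth :=
  csSup_le' <| by rintro _ ⟨l, hl, rfl⟩; exact le_depth hP hl

lemma height_lt_of_adj (hP : P.IsDag) (hxy : P.Adj x y) : P.height y < P.height x := by
  obtain ⟨l, hl, hlen⟩ := exists_isPath_length_eq_height hP (P.adj_mem x y hxy).2
  have := le_height hP (hl.cons hxy)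
  simp only [List.length_cons] at this
  omega

lemma height_lt_of_transGen (hP : P.IsDag) (h : Relation.TransGen P.Adj x y) :
    P.height y < P.height x := by
  induction h with
  | single h => exact height_lt_of_adj hP h
  | tail _ h ih => exact (height_lt_of_adj hP h).trans ih

lemma height_lt_of_desc_of_ne (hP : P.IsDag) (h : P.Desc x y) (hne : x ≠ y) :
    P.height y < P.height x :=
  height_lt_of_transGen hP ((Relation.reflTransGen_iff_eq_or_transGen.1 h).resolve_left hne.symm)

lemma height_le_of_desc (hP : P.IsDag) (h : P.Desc x y) : P.height y ≤ P.height x := by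
  rcases eq_or_ne x y with rfl | hne
  · exact le_rfl
  · exact (height_lt_of_desc_of_ne hP h hne).le

lemma mem_verts_of_desc (hx : x ∈ P.verts) (h : P.Desc x y) : y ∈ P.verts := by
  induction h with
  | refl => exact hx
  | tail _ h _ => exact (P.adj_mem _ _ h).2

lemma exists_first_desc (hP : P.IsDag) (hx : x ∈ P.verts) (Q : α → Prop) (hxy : P.Desc x y)
    (hy : Q y) : ∃ z, Q z ∧ P.Desc x z ∧ P.Desc z y ∧
      ∀ w, P.Desc x w → P.Desc w z → Q w → w = z := by
  obtain ⟨z, hz, hmax⟩ := Finset.exists_max_image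
    (P.verts.filter fun w => Q w ∧ P.Desc x w ∧ P.Desc w y) (P.height)
    ⟨y, Finset.mem_filter.2 ⟨mem_verts_of_desc hx hxy, hy, hxy, .refl⟩⟩
  obtain ⟨-, hQz, hxz, hzy⟩ := Finset.mem_filter.1 hz
  refine ⟨z, hQz, hxz, hzy, fun w hxw hwz hQw => by_contra fun hne => ?_⟩
  have := hmax w (Finset.mem_filter.2 ⟨mem_verts_of_desc hx hxw, hQw, hxw, hwz.trans hzy⟩)
  exact this.not_gt (height_lt_of_desc_of_ne hP hwz hne)

lemma exists_isRoot_desc (hP : P.IsDag) (hy : y ∈ P.verts) : ∃ r, P.IsRoot r ∧ P.Desc r y := by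
  obtain ⟨r, hr, hmax⟩ := Finset.exists_max_image (P.verts.filter fun w => P.Desc w y) P.height
    ⟨y, Finset.mem_filter.2 ⟨hy, .refl⟩⟩
  obtain ⟨hrV, hry⟩ := Finset.mem_filter.1 hr
  refine ⟨r, ⟨hrV, fun u hur => ?_⟩, hry⟩
  have := hmax u (Finset.mem_filter.2 ⟨(P.adj_mem u r hur).1, Relation.ReflTransGen.head hur hry⟩)
  exact this.not_gt (height_lt_of_adj hP hur)

lemma isRootPath_singleton (hr : P.IsRoot r) : P.IsRootPath [r] r :=
  ⟨List.cons_ne_nil r [], .singleton r, by simpa using hr.1, ⟨r, rfl, hr⟩, rfl⟩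

lemma IsRootPath.mem_verts (hl : P.IsRootPath l x) : x ∈ P.verts := by
  obtain ⟨-, -, hmem, -, hlast⟩ := hl
  exact hmem x (List.mem_of_getLast? hlast)

lemma IsRootPath.append_adj (hl : P.IsRootPath l x) (hxy : P.Adj x y) :
    P.IsRootPath (l ++ [y]) y := by
  obtain ⟨hne, hchain, hmem, ⟨r, hr, hroot⟩, hlast⟩ := hl
  refine ⟨by simp, ?_, ?_, ⟨r, by rwa [List.head?_append_of_ne_nil _ hne], hroot⟩, by simp⟩
  · exact hchain.append (.singleton y) fun a ha b hb => by
      simp only [hlast, Option.mem_def, Option.some.injEq, List.head?_cons] at ha hb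
      exact ha ▸ hb ▸ hxy
  · intro z hz
    rcases List.mem_append.1 hz with hz | hz
    · exact hmem z hz
    · exact List.mem_singleton.1 hz ▸ (P.adj_mem x y hxy).2

lemma IsRootPath.exists_append_of_desc (hl : P.IsRootPath l x) (hxy : P.Desc x y) :
    ∃ c, P.IsRootPath (l ++ c) y ∧ ∀ w ∈ c, P.Desc x w ∧ P.Desc w y := by
  induction hxy using Relation.ReflTransGen.head_induction_on generalizing l with
  | refl => exact ⟨[], by simpa using hl, by simp⟩
  | head hxz hzy ih =>
    obtain ⟨c, hc, hcdesc⟩ := ih (hl.append_adj hxz)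
    refine ⟨_ :: c, by simpa using hc, ?_⟩
    simp only [List.mem_cons, forall_eq_or_imp]
    exact ⟨⟨.single hxz, hzy⟩, fun w hw => ⟨.head hxz (hcdesc w hw).1, (hcdesc w hw).2⟩⟩

end Paths

section LowerBound

variable {D G : FinDigraph α} {P : FinDigraph β} {org : β → α} {ℓ : List β} {x s : β}

lemma exists_desc_preimage_of_reflTransGen (hval : D.IsValidDecomp P org)
    (hGD : ∀ u w, G.Adj u w → D.Adj u w) (hℓ : P.IsRootPath ℓ x)
    (hℓG : ∀ y ∈ ℓ, org y ∈ G.verts → y = x) (hxs : P.Desc x s) {u : α}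
    (hu : Relation.ReflTransGen G.Adj (org s) u) : ∃ u', org u' = u ∧ P.Desc x u' := by
  induction hu with
  | refl => exact ⟨s, rfl, hxs⟩
  | @tail b w _ hbw ih =>
    obtain ⟨b', rfl, hxb'⟩ := ih
    rcases hval.2.2.2 b' (mem_verts_of_desc hℓ.mem_verts hxb') w (hGD _ _ hbw) with
      ⟨u', -, hu', hb'u'⟩ | hcover
    · exact ⟨u', hu', hxb'.trans hb'u'⟩
    · obtain ⟨c, hc, hcdesc⟩ := hℓ.exists_append_of_desc hxb'
      obtain ⟨u', hu'ℓc, hu'⟩ := hcover _ hc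
      rcases List.mem_append.1 hu'ℓc with hu'ℓ | hu'c
      · exact ⟨u', hu', hℓG u' hu'ℓ (hu' ▸ (G.adj_mem _ _ hbw).2) ▸ .refl⟩
      · exact ⟨u', hu', (hcdesc u' hu'c).1⟩

lemma IsRootPath.exists_extend_to_first_preimage (hP : P.IsDag) (hℓ : P.IsRootPath ℓ x)
    {S T : Finset α} (hℓS : ∀ y ∈ ℓ, org y ∈ S → y = x) (hTS : T ⊆ S) (hxT : org x ∉ T)
    {t : β} (hxt : P.Desc x t) (ht : org t ∈ T) :
    ∃ z c, P.IsRootPath (ℓ ++ c) z ∧ (∀ y ∈ ℓ ++ c, org y ∈ T → y = z) ∧ P.Desc z t ∧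
      P.height z < P.height x := by
  obtain ⟨z, hz, hxz, hzt, hfirst⟩ := exists_first_desc hP hℓ.mem_verts (org · ∈ T) hxt ht
  obtain ⟨c, hc, hcdesc⟩ := hℓ.exists_append_of_desc hxz
  refine ⟨z, c, hc, fun y hy hyT => ?_, hzt,
    height_lt_of_desc_of_ne hP hxz fun h => hxT (h ▸ hz)⟩
  rcases List.mem_append.1 hy with hyℓ | hyc
  · exact absurd (hℓS y hyℓ (hTS hyT) ▸ hyT) hxT
  · exact hfirst y (hcdesc y hyc).1 (hcdesc y hyc).2 hyT

lemma ddp_le_height (hval : D.IsValidDecomp P org) (hGD : ∀ u w, G.Adj u w → D.Adj u w)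
    (hℓ : P.IsRootPath ℓ x) (hℓG : ∀ y ∈ ℓ, org y ∈ G.verts → y = x) (hxs : P.Desc x s)
    (hs : org s ∈ G.verts) (hGs : G.reachSet (org s) = G.verts) : ddp G ≤ P.height x := by
  induction hcard : G.verts.card using Nat.strong_induction_on generalizing G ℓ x s with
  | _ n ih =>
  have hP := hval.1
  have hx := hℓ.mem_verts
  by_cases h1 : G.verts.card ≤ 1
  · rw [ddp_of_card_le_one ⟨_, hs⟩ h1]
    exact one_le_height hP hx
  obtain ⟨v₀, hv₀, hxv₀⟩ : ∃ v₀ ∈ G.verts, org x ∉ (G.deleteVert v₀).verts := by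
    by_cases hxG : org x ∈ G.verts
    · exact ⟨org x, hxG, by simp [deleteVert_verts]⟩
    · exact ⟨org s, hs, by simp [deleteVert_verts, hxG]⟩
  have hcard' := card_deleteVert hv₀
  set G' := G.deleteVert v₀
  have hG'G : G'.verts ⊆ G.verts := deleteVert_verts (D := G) ▸ Finset.erase_subset v₀ G.verts
  suffices hR : ∀ R ∈ G'.fragments, ddp (G'.induce R) + 1 ≤ P.height x by
    have hG : ddp G ≤ 1 + ddp G' := ddp_le_one_add_ddp_deleteVert h1
      (by rw [fragments_eq_singleton_verts hs hGs, Finset.card_singleton]) hv₀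
    have hG' : ddp G' ≤ P.height x - 1 := ddp_le_of_forall_fragments
      (Finset.card_pos.1 (by omega)) fun R hR' => by have := hR R hR'; omega
    have := one_le_height hP hx
    omega
  intro R hR
  obtain ⟨⟨t, htG', rfl⟩, -⟩ := mem_fragments.1 hR
  set G₂ := G'.induce (G'.reachSet t)
  have hG₂G' : G₂.verts ⊆ G'.verts := Finset.inter_subset_left
  have ht : t ∈ G₂.verts := Finset.mem_inter.2 ⟨htG', mem_reachSet_self htG'⟩
  obtain ⟨t', rfl, hxt'⟩ := exists_desc_preimage_of_reflTransGen hval hGD hℓ hℓG hxs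
    (mem_reachSet.1 (hGs ▸ hG'G htG')).2
  obtain ⟨z, c, hc, hcG₂, hzt', hzx⟩ := hℓ.exists_extend_to_first_preimage hP hℓG
    (hG₂G'.trans hG'G) (fun h => hxv₀ (hG₂G' h)) hxt' ht
  have := Finset.card_le_card hG₂G'
  have := ih _ (by omega) (G := G₂) (fun u w h => hGD u w h.1.1) hc hcG₂ hzt' ht
    reachSet_induce_reachSet rfl
  omega

theorem ddp_le_depth (hne : D.verts.Nonempty) (hval : D.IsValidDecomp P org) :
    ddp D ≤ P.depth := by
  refine ddp_le_of_forall_fragments hne fun R hR => ?_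
  obtain ⟨⟨s, hs, rfl⟩, -⟩ := mem_fragments.1 hR
  obtain ⟨s', hs', rfl⟩ := hval.2.2.1 s hs
  obtain ⟨r, hr, hrs'⟩ := exists_isRoot_desc hval.1 hs'
  have hs'R := Finset.mem_inter.2 ⟨hs, mem_reachSet_self hs⟩
  refine (ddp_le_height hval (G := D.induce _) (fun u w h => h.1) (isRootPath_singleton hr)
    (fun y hy _ => List.mem_singleton.1 hy) hrs' hs'R reachSet_induce_reachSet).trans ?_
  exact height_le_depth hval.1 r

end LowerBound

structure IsOutClosedEmbedding (f : α → β) (P : FinDigraph α) (Q : FinDigraph β) : Prop where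
  injective : f.Injective
  mem_verts_iff : ∀ x, f x ∈ Q.verts ↔ x ∈ P.verts
  adj_iff : ∀ x y, Q.Adj (f x) (f y) ↔ P.Adj x y
  exists_eq_of_adj : ∀ x b, Q.Adj (f x) b → ∃ y, b = f y

namespace IsOutClosedEmbedding

variable {f : α → β} {P : FinDigraph α} {Q : FinDigraph β} {x y : α} {l : List α}

lemma exists_adj (h : IsOutClosedEmbedding f P Q) {b : β} (hb : Q.Adj (f x) b) :
    ∃ y, b = f y ∧ P.Adj x y := by
  obtain ⟨y, rfl⟩ := h.exists_eq_of_adj x b hb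
  exact ⟨y, rfl, (h.adj_iff x y).1 hb⟩

lemma desc (h : IsOutClosedEmbedding f P Q) (hxy : P.Desc x y) : Q.Desc (f x) (f y) :=
  hxy.lift f fun a b => (h.adj_iff a b).2

lemma exists_transGen (h : IsOutClosedEmbedding f P Q) {b : β}
    (hb : Relation.TransGen Q.Adj (f x) b) : ∃ y, b = f y ∧ Relation.TransGen P.Adj x y := by
  induction hb with
  | single hb =>
    obtain ⟨y, rfl, hxy⟩ := h.exists_adj hb
    exact ⟨y, rfl, .single hxy⟩
  | tail _ hbc ih =>
    obtain ⟨y, rfl, hxy⟩ := ih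
    obtain ⟨z, rfl, hyz⟩ := h.exists_adj hbc
    exact ⟨z, rfl, hxy.tail hyz⟩

lemma not_transGen_self (h : IsOutClosedEmbedding f P Q) (hP : P.IsDag) :
    ¬ Relation.TransGen Q.Adj (f x) (f x) := fun hx => by
  obtain ⟨y, hy, hxy⟩ := h.exists_transGen hx
  exact hP x (h.injective hy ▸ hxy)

lemma isPath_map (h : IsOutClosedEmbedding f P Q) (hl : P.IsPath l) : Q.IsPath (l.map f) :=
  ⟨List.isChain_map_of_isChain f (fun a b => (h.adj_iff a b).2) hl.1,
    by simpa [h.mem_verts_iff] using hl.2⟩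

lemma exists_isPath_of_isPath_cons (h : IsOutClosedEmbedding f P Q) {t : List β}
    (ht : Q.IsPath (f x :: t)) : ∃ l, t = l.map f ∧ P.IsPath (x :: l) := by
  obtain ⟨l, rfl, hl⟩ := ht.1.exists_eq_map_of_cons fun a b => h.exists_adj
  refine ⟨l, rfl, hl, fun z hz => (h.mem_verts_iff z).1 (ht.2 _ ?_)⟩
  rw [← List.map_cons]
  exact List.mem_map_of_mem hz

lemma length_le_depth (h : IsOutClosedEmbedding f P Q) (hP : P.IsDag) {t : List β}
    (ht : Q.IsPath (f x :: t)) : t.length + 1 ≤ P.depth := by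
  obtain ⟨l, rfl, hl⟩ := h.exists_isPath_of_isPath_cons ht
  simpa using le_depth hP hl

lemma depth_le (h : IsOutClosedEmbedding f P Q) (hQ : Q.IsDag) : P.depth ≤ Q.depth :=
  FinDigraph.depth_le fun l hl => by simpa using le_depth hQ (h.isPath_map hl)

lemma exists_isRootPath (h : IsOutClosedEmbedding f P Q) (hx : P.IsRoot x) {t : List β} {b : β}
    (ht : Q.IsPath (f x :: t)) (hb : (f x :: t).getLast? = some b) :
    ∃ l y, t = l.map f ∧ b = f y ∧ P.IsRootPath (x :: l) y := by
  obtain ⟨l, rfl, hl⟩ := h.exists_isPath_of_isPath_cons ht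
  refine ⟨l, (x :: l).getLast (List.cons_ne_nil x l), rfl, ?_, List.cons_ne_nil x l, hl.1, hl.2,
    ⟨x, rfl, hx⟩, List.getLast?_eq_some_getLast _⟩
  change ((x :: l).map f).getLast? = _ at hb
  rw [List.getLast?_map, List.getLast?_eq_some_getLast (List.cons_ne_nil x l)] at hb
  exact (Option.some.inj hb).symm

end IsOutClosedEmbedding

/-- The new root `0` is joined only to the roots of `P`, so that the root paths of the cone are
`0` followed by root paths of `P`. -/
def cone (P : FinDigraph ℕ) : FinDigraph ℕ where
  verts := insert 0 (P.verts.image (· + 1))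
  Adj
    | 0, y + 1 => P.IsRoot y
    | x + 1, y + 1 => P.Adj x y
    | _, 0 => False
  adj_mem
    | 0, y + 1, h => by simpa using h.1
    | x + 1, y + 1, h => by simpa using P.adj_mem x y h

section Cone

variable {P : FinDigraph ℕ} {a x y : ℕ} {l : List ℕ}

@[simp]
lemma succ_mem_cone_verts : x + 1 ∈ (cone P).verts ↔ x ∈ P.verts := by
  simp [cone]

lemma zero_mem_cone_verts : 0 ∈ (cone P).verts :=
  Finset.mem_insert_self _ _

lemma not_cone_adj_zero : ¬ (cone P).Adj a 0 := by
  cases a <;> exact id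

lemma cone_adj_zero_succ : (cone P).Adj 0 (y + 1) ↔ P.IsRoot y := Iff.rfl

lemma isOutClosedEmbedding_cone : IsOutClosedEmbedding (· + 1) P (cone P) where
  injective := add_left_injective 1
  mem_verts_iff _ := succ_mem_cone_verts
  adj_iff _ _ := Iff.rfl
  exists_eq_of_adj
    | _, 0, h => absurd h not_cone_adj_zero
    | _, y + 1, _ => ⟨y, rfl⟩

lemma isDag_cone (hP : P.IsDag) : (cone P).IsDag
  | 0, h => not_cone_adj_zero (Relation.TransGen.tail'_iff.1 h).choose_spec.2
  | _ + 1, h => isOutClosedEmbedding_cone.not_transGen_self hP h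

lemma eq_zero_of_isRoot_cone {r : ℕ} (hr : (cone P).IsRoot r) : r = 0 := by
  obtain _ | x := r
  · rfl
  by_cases hx : P.IsRoot x
  · exact absurd hx (hr.2 0)
  · obtain ⟨u, hu⟩ : ∃ u, P.Adj u x := by
      simpa [IsRoot, succ_mem_cone_verts.1 hr.1] using hx
    exact absurd hu (hr.2 (u + 1))

lemma cone_desc_zero (hP : P.IsDag) (hx : x ∈ P.verts) : (cone P).Desc 0 (x + 1) := by
  obtain ⟨r, hr, hrx⟩ := exists_isRoot_desc hP hx
  exact .head (cone_adj_zero_succ.2 hr) (isOutClosedEmbedding_cone.desc hrx)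

lemma exists_isRootPath_of_isRootPath_cone (hl : (cone P).IsRootPath l (x + 1)) :
    ∃ l', P.IsRootPath l' x ∧ l = 0 :: l'.map (· + 1) := by
  obtain ⟨hne, hchain, hmem, ⟨r, hr, hroot⟩, hlast⟩ := hl
  obtain ⟨w, t, rfl⟩ := List.exists_cons_of_ne_nil hne
  obtain rfl : w = r := Option.some.inj hr
  obtain rfl := eq_zero_of_isRoot_cone hroot
  obtain _ | ⟨_ | y, t⟩ := t
  · simp at hlast
  · exact absurd (List.isChain_cons_cons.1 hchain).1 not_cone_adj_zero
  obtain ⟨hy, hyt⟩ := List.isChain_cons_cons.1 hchain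
  rw [List.getLast?_cons_cons] at hlast
  obtain ⟨l', w, rfl, hxw, hl'⟩ := isOutClosedEmbedding_cone.exists_isRootPath
    (cone_adj_zero_succ.1 hy) (IsPath.of_cons ⟨hchain, hmem⟩) hlast
  exact ⟨y :: l', Nat.add_right_cancel hxw ▸ hl', rfl⟩

lemma depth_cone (hP : P.IsDag) : (cone P).depth = P.depth + 1 := by
  refine le_antisymm (depth_le fun l hl => ?_) ?_
  · obtain _ | ⟨_ | x, t⟩ := l
    · exact Nat.zero_le _
    · obtain _ | ⟨_ | y, t⟩ := t
      · simp
      · exact absurd (List.isChain_cons_cons.1 hl.1).1 not_cone_adj_zero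
      · simpa using isOutClosedEmbedding_cone.length_le_depth hP hl.of_cons
    · have := isOutClosedEmbedding_cone.length_le_depth hP hl
      simp only [List.length_cons]
      omega
  · obtain ⟨l, hl, hlen⟩ := exists_isPath_length_eq_depth hP
    obtain _ | ⟨x, t⟩ := l
    · rw [← hlen]
      exact le_depth (isDag_cone hP) (isPath_singleton zero_mem_cone_verts)
    -- the path `0, r + 1, …` down from a root `r` above `x` is at least as long
    obtain ⟨r, hr, hrx⟩ := exists_isRoot_desc hP (hl.2 x List.mem_cons_self)
    obtain ⟨m, hm, hmlen⟩ := exists_isPath_length_eq_height hP hr.1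
    have := (le_height hP hl).trans (height_le_of_desc hP hrx)
    have := le_depth (isDag_cone hP)
      ((isOutClosedEmbedding_cone.isPath_map hm).cons (cone_adj_zero_succ.2 hr))
    simp only [List.length_cons, List.length_map] at this hlen
    omega

theorem IsValidDecomp.cone {D : FinDigraph α} {v : α} {org : ℕ → α} (hv : v ∈ D.verts)
    (hval : (D.deleteVert v).IsValidDecomp P org) :
    D.IsValidDecomp (cone P) (fun | 0 => v | n + 1 => org n) := by
  obtain ⟨hP, horg, hsurj, hcover⟩ := hval
  simp only [deleteVert_verts, Finset.mem_erase] at horg hsurj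
  refine ⟨isDag_cone hP, ?_, ?_, ?_⟩
  · rintro (_ | x) hx
    · exact hv
    · exact (horg x (succ_mem_cone_verts.1 hx)).2
  · intro u hu
    by_cases huv : u = v
    · exact ⟨0, zero_mem_cone_verts, huv.symm⟩
    · obtain ⟨x, hx, rfl⟩ := hsurj u ⟨huv, hu⟩
      exact ⟨x + 1, succ_mem_cone_verts.2 hx, rfl⟩
  rintro (_ | x) hx u hu
  · by_cases huv : u = v
    · exact .inl ⟨0, zero_mem_cone_verts, huv.symm, .refl⟩
    · obtain ⟨y, hy, rfl⟩ := hsurj u ⟨huv, (D.adj_mem _ _ hu).2⟩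
      exact .inl ⟨y + 1, succ_mem_cone_verts.2 hy, rfl, cone_desc_zero hP hy⟩
  have hx := succ_mem_cone_verts.1 hx
  by_cases huv : u = v
  · refine .inr fun l hl => ⟨0, ?_, huv.symm⟩
    obtain ⟨l', -, rfl⟩ := exists_isRootPath_of_isRootPath_cone hl
    exact List.mem_cons_self
  have hu' : (D.deleteVert v).Adj (org x) u :=
    ⟨hu, Finset.mem_erase.2 (horg x hx), Finset.mem_erase.2 ⟨huv, (D.adj_mem _ _ hu).2⟩⟩
  rcases hcover x hx u hu' with ⟨u', hu'P, rfl, hxu'⟩ | hcov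
  · exact .inl ⟨u' + 1, succ_mem_cone_verts.2 hu'P, rfl, isOutClosedEmbedding_cone.desc hxu'⟩
  · refine .inr fun l hl => ?_
    obtain ⟨l', hl', rfl⟩ := exists_isRootPath_of_isRootPath_cone hl
    obtain ⟨u', hu'l', rfl⟩ := hcov l' hl'
    exact ⟨u' + 1, List.mem_cons_of_mem _ (List.mem_map_of_mem hu'l'), rfl⟩

end Cone

def disjointUnion (k : ℕ) (P : ℕ → FinDigraph ℕ) : FinDigraph ℕ where
  verts := (Finset.range k).biUnion fun i => (P i).verts.image (Nat.pair i)
  Adj a b := ∃ i < k, ∃ x y, (P i).Adj x y ∧ a = Nat.pair i x ∧ b = Nat.pair i y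
  adj_mem := by
    rintro _ _ ⟨i, hi, x, y, h, rfl, rfl⟩
    simp only [Finset.mem_biUnion, Finset.mem_range, Finset.mem_image]
    exact ⟨⟨i, hi, x, ((P i).adj_mem x y h).1, rfl⟩, ⟨i, hi, y, ((P i).adj_mem x y h).2, rfl⟩⟩

section DisjointUnion

variable {k i : ℕ} {P : ℕ → FinDigraph ℕ} {a x : ℕ} {l : List ℕ}

lemma mem_disjointUnion_verts :
    a ∈ (disjointUnion k P).verts ↔ ∃ i < k, ∃ x ∈ (P i).verts, a = Nat.pair i x := by
  simp only [disjointUnion, Finset.mem_biUnion, Finset.mem_range, Finset.mem_image, eq_comm]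

lemma isOutClosedEmbedding_disjointUnion (hi : i < k) :
    IsOutClosedEmbedding (Nat.pair i) (P i) (disjointUnion k P) where
  injective _ _ h := (Nat.pair_eq_pair.1 h).2
  mem_verts_iff x := by
    simp only [mem_disjointUnion_verts, Nat.pair_eq_pair]
    exact ⟨fun ⟨_, _, _, hx, rfl, rfl⟩ => hx, fun hx => ⟨i, hi, x, hx, rfl, rfl⟩⟩
  adj_iff x y := by
    refine ⟨fun ⟨j, _, x', y', h, hx, hy⟩ => ?_, fun h => ⟨i, hi, x, y, h, rfl, rfl⟩⟩
    obtain ⟨rfl, rfl⟩ := Nat.pair_eq_pair.1 hx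
    obtain ⟨-, rfl⟩ := Nat.pair_eq_pair.1 hy
    exact h
  exists_eq_of_adj := by
    rintro x _ ⟨j, _, x', y', -, hx, rfl⟩
    obtain ⟨rfl, -⟩ := Nat.pair_eq_pair.1 hx
    exact ⟨y', rfl⟩

lemma isDag_disjointUnion (hP : ∀ i < k, (P i).IsDag) : (disjointUnion k P).IsDag := by
  intro a ha
  obtain ⟨b, ⟨i, hi, x, -, -, rfl, -⟩, -⟩ := Relation.TransGen.head'_iff.1 ha
  exact (isOutClosedEmbedding_disjointUnion hi).not_transGen_self (hP i hi) ha

lemma depth_disjointUnion_le {n : ℕ} (hP : ∀ i < k, (P i).IsDag)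
    (h : ∀ i < k, (P i).depth ≤ n) : (disjointUnion k P).depth ≤ n := by
  refine depth_le fun l hl => ?_
  obtain _ | ⟨a, t⟩ := l
  · exact Nat.zero_le n
  obtain ⟨i, hi, x, -, rfl⟩ := mem_disjointUnion_verts.1 (hl.2 _ List.mem_cons_self)
  exact ((isOutClosedEmbedding_disjointUnion hi).length_le_depth (hP i hi) hl).trans (h i hi)

lemma depth_le_depth_disjointUnion (hP : ∀ i < k, (P i).IsDag) (hi : i < k) :
    (P i).depth ≤ (disjointUnion k P).depth :=
  (isOutClosedEmbedding_disjointUnion hi).depth_le (isDag_disjointUnion hP)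

lemma exists_isRootPath_of_isRootPath_disjointUnion
    (hl : (disjointUnion k P).IsRootPath l (Nat.pair i x)) :
    ∃ l', (P i).IsRootPath l' x ∧ l = l'.map (Nat.pair i) := by
  obtain ⟨hne, hchain, hmem, ⟨r, hr, hroot⟩, hlast⟩ := hl
  obtain ⟨w, t, rfl⟩ := List.exists_cons_of_ne_nil hne
  obtain rfl : w = r := Option.some.inj hr
  obtain ⟨j, hj, z, -, rfl⟩ := mem_disjointUnion_verts.1 hroot.1
  have hemb := isOutClosedEmbedding_disjointUnion (P := P) hj
  have hz : (P j).IsRoot z :=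
    ⟨(hemb.mem_verts_iff z).1 hroot.1, fun u hu => hroot.2 _ ((hemb.adj_iff u z).2 hu)⟩
  obtain ⟨l', y, rfl, hxy, hl'⟩ := hemb.exists_isRootPath hz ⟨hchain, hmem⟩ hlast
  obtain ⟨rfl, rfl⟩ := Nat.pair_eq_pair.1 hxy
  exact ⟨z :: l', hl', rfl⟩

theorem IsValidDecomp.disjointUnion {D : FinDigraph α} {F : ℕ → Finset α} {org : ℕ → ℕ → α}
    (hF : ∀ i < k, ∀ u ∈ F i, ∀ w, D.Adj u w → w ∈ F i)
    (hcover : ∀ v ∈ D.verts, ∃ i < k, v ∈ F i)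
    (hval : ∀ i < k, (D.induce (F i)).IsValidDecomp (P i) (org i)) :
    D.IsValidDecomp (disjointUnion k P) (fun a => org a.unpair.1 a.unpair.2) := by
  refine ⟨isDag_disjointUnion fun i hi => (hval i hi).1, ?_, ?_, ?_⟩
  · intro a ha
    obtain ⟨i, hi, x, hx, rfl⟩ := mem_disjointUnion_verts.1 ha
    simpa using (Finset.mem_inter.1 ((hval i hi).2.1 x hx)).1
  · intro v hv
    obtain ⟨i, hi, hvF⟩ := hcover v hv
    obtain ⟨x, hx, rfl⟩ := (hval i hi).2.2.1 v (Finset.mem_inter.2 ⟨hv, hvF⟩)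
    exact ⟨_, ((isOutClosedEmbedding_disjointUnion hi).mem_verts_iff x).2 hx, by simp⟩
  intro a ha u hu
  obtain ⟨i, hi, x, hx, rfl⟩ := mem_disjointUnion_verts.1 ha
  simp only [Nat.unpair_pair] at hu ⊢
  have hemb := isOutClosedEmbedding_disjointUnion (P := P) hi
  have hxF := (Finset.mem_inter.1 ((hval i hi).2.1 x hx)).2
  rcases (hval i hi).2.2.2 x hx u ⟨hu, hxF, hF i hi _ hxF u hu⟩ with
    ⟨u', hu', rfl, hxu'⟩ | hcov
  · exact .inl ⟨_, (hemb.mem_verts_iff u').2 hu', by simp, hemb.desc hxu'⟩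
  · refine .inr fun l hl => ?_
    obtain ⟨l', hl', rfl⟩ := exists_isRootPath_of_isRootPath_disjointUnion hl
    obtain ⟨u', hu'l', rfl⟩ := hcov l' hl'
    exact ⟨_, List.mem_map_of_mem hu'l', by simp⟩

end DisjointUnion

def empty : FinDigraph ℕ where
  verts := ∅
  Adj _ _ := False
  adj_mem _ _ := False.elim

lemma isDag_empty : empty.IsDag := fun _ h => (Relation.TransGen.head'_iff.1 h).choose_spec.1

lemma depth_empty : empty.depth = 0 :=
  Nat.le_zero.1 <| depth_le fun
    | [], _ => le_rfl
    | _ :: _, hl => absurd (hl.2 _ List.mem_cons_self) (Finset.notMem_empty _)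

lemma isValidDecomp_empty {D : FinDigraph α} (hD : D.verts = ∅) (org : ℕ → α) :
    D.IsValidDecomp empty org :=
  ⟨isDag_empty, fun _ h => absurd h (Finset.notMem_empty _),
    fun _ h => absurd (hD ▸ h) (Finset.notMem_empty _), fun _ h => absurd h (Finset.notMem_empty _)⟩

lemma exists_isValidDecomp_depth_eq_sup_fragments {D : FinDigraph α} (hne : D.verts.Nonempty)
    (h : ∀ R ∈ D.fragments, ∃ (P : FinDigraph ℕ) (org : ℕ → α),
      (D.induce R).IsValidDecomp P org ∧ P.depth = ddp (D.induce R)) :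
    ∃ (P : FinDigraph ℕ) (org : ℕ → α), D.IsValidDecomp P org ∧
      P.depth = D.fragments.sup fun R => ddp (D.induce R) := by
  set L := D.fragments.toList
  have hL : ∀ i < L.length, L.getD i ∅ ∈ D.fragments := fun i hi => by
    rw [List.getD_eq_getElem _ _ hi]
    exact Finset.mem_toList.1 (List.getElem_mem hi)
  have hdecomp : ∀ i, ∃ (P : FinDigraph ℕ) (org : ℕ → α), i < L.length →
      (D.induce (L.getD i ∅)).IsValidDecomp P org ∧ P.depth = ddp (D.induce (L.getD i ∅)) := by
    intro i
    by_cases hi : i < L.length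
    · obtain ⟨P, org, h⟩ := h _ (hL i hi)
      exact ⟨P, org, fun _ => h⟩
    · exact ⟨empty, fun _ => hne.choose, fun h => absurd h hi⟩
  choose P org hP using hdecomp
  have hPdag : ∀ i < L.length, (P i).IsDag := fun i hi => (hP i hi).1.1
  refine ⟨disjointUnion L.length P, _, IsValidDecomp.disjointUnion
    (fun i hi u hu w huw => (mem_fragments.1 (hL i hi)).mem_of_adj hu huw) ?_
    (fun i hi => (hP i hi).1), le_antisymm ?_ ?_⟩
  · intro v hv
    obtain ⟨R, hR, hvR⟩ := exists_fragment_superset_reachSet hv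
    obtain ⟨i, hi, rfl⟩ := List.mem_iff_getElem.1 (Finset.mem_toList.2 hR)
    exact ⟨i, hi, by rw [List.getD_eq_getElem _ _ hi]; exact hvR (mem_reachSet_self hv)⟩
  · exact depth_disjointUnion_le hPdag fun i hi => (hP i hi).2 ▸
      Finset.le_sup (f := fun R => ddp (D.induce R)) (hL i hi)
  · refine Finset.sup_le fun R hR => ?_
    obtain ⟨i, hi, rfl⟩ := List.mem_iff_getElem.1 (Finset.mem_toList.2 hR)
    rw [← List.getD_eq_getElem _ ∅ hi, ← (hP i hi).2]
    exact depth_le_depth_disjointUnion hPdag hi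

theorem exists_isValidDecomp_depth_eq_ddp {D : FinDigraph α} (hne : D.verts.Nonempty) :
    ∃ (P : FinDigraph ℕ) (org : ℕ → α), D.IsValidDecomp P org ∧ P.depth = ddp D := by
  induction hcard : D.verts.card using Nat.strong_induction_on generalizing D with
  | _ n ih =>
  rw [ddp_eq hne]
  split_ifs with h1 h2
  · obtain ⟨v, hv⟩ := hne
    have := card_deleteVert hv
    refine ⟨cone empty, _, (isValidDecomp_empty ?_ fun _ => v).cone hv, ?_⟩
    · exact Finset.card_eq_zero.1 (by omega)
    · rw [depth_cone isDag_empty, depth_empty]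
  · obtain ⟨v, hv, hmin⟩ := D.verts.exists_min_image (fun v => ddp (D.deleteVert v)) hne
    have := card_deleteVert hv
    obtain ⟨P, org, hval, hdepth⟩ := ih _ (by omega) (D := D.deleteVert v)
      (Finset.card_pos.1 (by omega)) rfl
    refine ⟨cone P, _, hval.cone hv, ?_⟩
    rw [depth_cone hval.1, hdepth, add_comm]
    exact congrArg _ (le_antisymm (Finset.le_inf' _ _ hmin) (Finset.inf'_le _ hv))
  · exact exists_isValidDecomp_depth_eq_sup_fragments hne fun R hR =>
      ih _ (hcard ▸ card_induce_fragment_lt hR h2) (nonempty_induce_fragment hR) rfl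

end FinDigraph

open FinDigraph in
/-- `ddp D` equals the minimum of `depth P` over all valid DAG-depth
decompositions `(P, org)` of `D`: some valid decomposition attains depth `ddp D`,
and every valid decomposition has depth at least `ddp D`. -/
theorem ddp_eq_min_depth_valid_decomp {α : Type} (D : FinDigraph α)
    (hne : D.verts.Nonempty) :
    (∃ (P : FinDigraph ℕ) (org : ℕ → α), IsValidDecomp D P org ∧ depth P = ddp D) ∧
    (∀ (β : Type) (P : FinDigraph β) (org : β → α),
      IsValidDecomp D P org → ddp D ≤ depth P) :=
  ⟨exists_isValidDecomp_depth_eq_ddp hne, fun _ _ _ hval => ddp_le_depth hne hval⟩
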